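/- Let X_1, …, X_{n+1} be exchangeable, almost surely pairwise distinct real-valued random variables, and let α ∈ (0,1) satisfy α ≥ 1/(n+1). Set k = ⌈(n+1)(1−α)⌉. Then 1 ≤ k ≤ n, and the calibrated threshold θ̂ = X_{(k)} satisfies P(X_{n+1} ≤ θ̂) = ⌈(n+1)(1−α)⌉/(n+1) ≥ 1 − α. -/

import Mathlib

/-!
Let `B i` be the event that fewer than `k` of the `n + 1` points lie strictly below `X i`, so
that the event of the theorem is `B (n+1)`: `X_{n+1} ≤ X_{(k)}` holds exactly when at most
`k - 1` calibration points lie below `X_{n+1}`. By exchangeability all `B i` have the same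
probability, and since the points are almost surely distinct, their ranks are almost surely a
permutation of `0, …, n`, so exactly `k` of the events occur. Taking expectations,
`(n + 1) P(B (n+1)) = k`.
-/

open MeasureTheory ProbabilityTheory
open scoped ENNReal

/-- The `k`-th smallest value (1-indexed) among the values `f 0, …, f (n-1)`. -/
noncomputable def kthSmallest (n : ℕ) (f : Fin n → ℝ) (k : ℕ) : ℝ :=
  ((Multiset.map f (Finset.univ : Finset (Fin n)).val).sort (· ≤ ·)).getD (k - 1) 0

open Finset

theorem List.le_getElem_iff_countP_lt_le {α : Type*} [LinearOrder α] {l : List α}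
    (hl : l.Pairwise (· ≤ ·)) {i : ℕ} (hi : i < l.length) (x : α) :
    x ≤ l[i] ↔ l.countP (fun y => y < x) ≤ i := by
  have hsplit : ∀ m, l.countP (fun y => y < x) =
      (l.take m).countP (fun y => y < x) + (l.drop m).countP (fun y => y < x) := fun m => by
    rw [← List.countP_append, List.take_append_drop]
  constructor
  · intro hx
    have hdrop : (l.drop i).countP (fun y => y < x) = 0 := by
      refine List.countP_eq_zero.2 fun y hy => ?_
      obtain ⟨m, hm, rfl⟩ := List.mem_iff_getElem.mp hy
      rw [List.length_drop] at hm
      have := hl.rel_get_of_le (a := ⟨i, hi⟩) (b := ⟨i + m, by omega⟩) (by simp)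
      simpa using hx.trans this
    have htake := (l.take i).countP_le_length (p := fun y => decide (y < x))
    rw [List.length_take] at htake
    have := hsplit i
    omega
  · intro hc
    by_contra! hx
    have htake : (l.take (i + 1)).countP (fun y => y < x) = i + 1 := by
      rw [List.countP_eq_length.2, List.length_take]
      · omega
      intro y hy
      obtain ⟨m, hm, rfl⟩ := List.mem_iff_getElem.mp hy
      rw [List.length_take] at hm
      have := hl.rel_get_of_le (a := ⟨m, by omega⟩) (b := ⟨i, hi⟩) (by simp; omega)
      simpa using lt_of_le_of_lt (by simpa using this) hx
    have := hsplit (i + 1)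
    omega

theorem le_kthSmallest_iff {n k : ℕ} (hk1 : 1 ≤ k) (hkn : k ≤ n) (f : Fin n → ℝ)
    (x : ℝ) :
    x ≤ kthSmallest n f k ↔ #{j | f j < x} < k := by
  set s := Multiset.map f (univ : Finset (Fin n)).val
  have hcount : (s.sort (· ≤ ·)).countP (fun y => y < x) = #{j | f j < x} := by
    rw [← Multiset.coe_countP, Multiset.sort_eq, Multiset.countP_map]
    rfl
  rw [kthSmallest, List.getD_eq_getElem _ _ (by simp; omega),
    List.le_getElem_iff_countP_lt_le (Multiset.pairwise_sort _ _) _ x, hcount]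
  omega

section StrictRank

variable {ι α : Type*} [Fintype ι] [LinearOrder α]

def strictRank (v : ι → α) (i : ι) : ℕ := #{j | v j < v i}

theorem strictRank_lt_strictRank {v : ι → α} {i i' : ι} (h : v i < v i') :
    strictRank v i < strictRank v i' :=
  card_lt_card <| (ssubset_iff_of_subset fun _ hj => by
    simp only [mem_filter, mem_univ, true_and] at hj ⊢; exact hj.trans h).2
    ⟨i, by simp [h], by simp⟩

theorem strictRank_lt_card (v : ι → α) (i : ι) : strictRank v i < Fintype.card ι :=
  card_lt_univ_of_notMem (s := {j | v j < v i}) (x := i) (by simp)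

theorem strictRank_injective {v : ι → α} (hv : Function.Injective v) :
    Function.Injective (strictRank v) := by
  intro i i' h
  rcases lt_trichotomy (v i) (v i') with hlt | heq | hgt
  · exact absurd h (strictRank_lt_strictRank hlt).ne
  · exact hv heq
  · exact absurd h (strictRank_lt_strictRank hgt).ne'

theorem image_strictRank {v : ι → α} (hv : Function.Injective v) [DecidableEq ι] :
    univ.image (strictRank v) = range (Fintype.card ι) :=
  eq_of_subset_of_card_le
    (fun _ ht => by
      obtain ⟨i, -, rfl⟩ := mem_image.1 ht
      exact mem_range.2 (strictRank_lt_card v i))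
    (by rw [card_range, card_image_of_injective _ (strictRank_injective hv), card_univ])

theorem card_strictRank_lt {v : ι → α} (hv : Function.Injective v) {k : ℕ}
    (hk : k ≤ Fintype.card ι) : #{i | strictRank v i < k} = k := by
  classical
  calc #{i | strictRank v i < k}
      = #((univ.filter fun i => strictRank v i < k).image (strictRank v)) :=
        (card_image_of_injective _ (strictRank_injective hv)).symm
    _ = #((range (Fintype.card ι)).filter (· < k)) := by
        rw [← image_strictRank hv, filter_image]
    _ = #(range k) := by congr 1; ext t; simp only [mem_filter, mem_range]; omega
    _ = k := card_range k

theorem strictRank_comp_perm (v : ι → α) (σ : Equiv.Perm ι) (i : ι) :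
    strictRank (v ∘ σ) i = strictRank v (σ i) :=
  card_equiv σ (by simp)

theorem strictRank_last {n : ℕ} (v : Fin (n + 1) → α) :
    strictRank v (Fin.last n) = #{j : Fin n | v j.castSucc < v (Fin.last n)} := by
  rw [strictRank, Fin.univ_succAbove n (Fin.last n), filter_cons, if_neg (lt_irrefl _),
    filter_map, card_map]
  simp [Fin.succAboveEmb, Fin.succAbove_last]

end StrictRank

section Measure

variable {Ω ι α : Type*} [MeasurableSpace Ω] {μ : Measure Ω}

theorem ae_injective_of_measure_eq_zero [Countable ι] {X : ι → Ω → α}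
    (h : ∀ i j, i ≠ j → μ {ω | X i ω = X j ω} = 0) :
    ∀ᵐ ω ∂μ, Function.Injective fun i => X i ω := by
  have : ∀ᵐ ω ∂μ, ∀ i j, i ≠ j → X i ω ≠ X j ω := by
    refine ae_all_iff.2 fun i => ae_all_iff.2 fun j => ?_
    rcases eq_or_ne i j with rfl | hij
    · exact .of_forall fun _ h => absurd rfl h
    · exact (measure_eq_zero_iff_ae_notMem.1 (h i j hij)).mono fun _ hω _ => hω
  filter_upwards [this] with ω hω
  exact fun i j hij => not_not.1 fun hne => hω i j hne hij

theorem sum_measure_eq_of_ae_card_eq [Fintype ι] {B : ι → Set Ω}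
    [∀ ω, DecidablePred fun i => ω ∈ B i] (hB : ∀ i, MeasurableSet (B i)) {k : ℕ}
    (h : ∀ᵐ ω ∂μ, #{i | ω ∈ B i} = k) : ∑ i, μ (B i) = k * μ Set.univ := by
  calc ∑ i, μ (B i) = ∑ i, ∫⁻ ω, (B i).indicator 1 ω ∂μ := by
        simp only [lintegral_indicator_one (hB _)]
    _ = ∫⁻ ω, ∑ i, (B i).indicator 1 ω ∂μ :=
        (lintegral_finsetSum _ fun i _ => measurable_one.indicator (hB i)).symm
    _ = ∫⁻ _, (k : ℝ≥0∞) ∂μ := lintegral_congr_ae <| h.mono fun ω hω => by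
        simp [sum_indicator_eq_sum_filter, hω]
    _ = k * μ Set.univ := lintegral_const _

variable [Fintype ι] [LinearOrder α] [MeasurableSpace α] [TopologicalSpace α]
  [OpensMeasurableSpace α] [OrderClosedTopology α] [SecondCountableTopology α]

theorem measurableSet_strictRank_lt (i : ι) (k : ℕ) :
    MeasurableSet {v : ι → α | strictRank v i < k} := by
  have : Measurable fun v : ι → α => strictRank v i := by
    simp only [strictRank, card_filter]
    exact Finset.measurable_sum _ fun j _ => Measurable.ite
      (measurableSet_lt (measurable_pi_apply j) (measurable_pi_apply i))
      measurable_const measurable_const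
  exact this measurableSet_Iio

theorem measure_strictRank_lt_eq_of_exchangeable [DecidableEq ι] {X : ι → Ω → α}
    (hmeas : ∀ i, Measurable (X i))
    (hexch : ∀ σ : Equiv.Perm ι,
      Measure.map (fun ω i => X (σ i) ω) μ = Measure.map (fun ω i => X i ω) μ)
    (i i' : ι) (k : ℕ) :
    μ {ω | strictRank (X · ω) i' < k} = μ {ω | strictRank (X · ω) i < k} := by
  have hS := measurableSet_strictRank_lt (α := α) i k
  have hpre : {ω | strictRank (X · ω) i' < k} =
      (fun ω j => X (Equiv.swap i i' j) ω) ⁻¹' {v | strictRank v i < k} := by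
    ext ω
    have := strictRank_comp_perm (X · ω) (Equiv.swap i i') i
    rw [Equiv.swap_apply_left] at this
    exact iff_of_eq (congrArg (· < k) this.symm)
  rw [hpre, ← Measure.map_apply (measurable_pi_lambda _ fun j => hmeas _) hS, hexch,
    Measure.map_apply (measurable_pi_lambda _ hmeas) hS]
  rfl

end Measure

theorem one_le_natCeil_mul_one_sub_le {n : ℕ} {α : ℝ} (hα1 : α < 1)
    (hα' : 1 / ((n : ℝ) + 1) ≤ α) :
    1 ≤ ⌈((n : ℝ) + 1) * (1 - α)⌉₊ ∧ ⌈((n : ℝ) + 1) * (1 - α)⌉₊ ≤ n := by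
  rw [div_le_iff₀ (by positivity)] at hα'
  exact ⟨Nat.one_le_ceil_iff.2 (by nlinarith), Nat.ceil_le.2 (by nlinarith)⟩

/-- For exchangeable, a.s. pairwise distinct `X 0, …, X n` and
`α ∈ (0,1)` with `α ≥ 1/(n+1)`, the index `k = ⌈(n+1)(1-α)⌉` satisfies `1 ≤ k ≤ n`, and the
calibrated threshold `θ̂ = X_{(k)}` satisfies
`P(X_{n+1} ≤ θ̂) = ⌈(n+1)(1-α)⌉ / (n+1) ≥ 1 - α`. -/
theorem calibrated_threshold_coverage
    {Ω : Type*} [MeasurableSpace Ω] (μ : Measure Ω) [IsProbabilityMeasure μ]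
    (n : ℕ) (X : Fin (n + 1) → Ω → ℝ) (hmeas : ∀ i, Measurable (X i))
    (hexch : ∀ σ : Equiv.Perm (Fin (n + 1)),
      Measure.map (fun ω => fun i => X (σ i) ω) μ = Measure.map (fun ω => fun i => X i ω) μ)
    (hdist : ∀ i j, i ≠ j → μ {ω | X i ω = X j ω} = 0)
    (α : ℝ) (hα : α ∈ Set.Ioo (0 : ℝ) 1) (hα' : 1 / ((n : ℝ) + 1) ≤ α) :
    (1 ≤ ⌈((n : ℝ) + 1) * (1 - α)⌉₊ ∧ ⌈((n : ℝ) + 1) * (1 - α)⌉₊ ≤ n) ∧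
    μ {ω | X (Fin.last n) ω ≤
        kthSmallest n (fun i : Fin n => X i.castSucc ω) ⌈((n : ℝ) + 1) * (1 - α)⌉₊}
      = (⌈((n : ℝ) + 1) * (1 - α)⌉₊ : ℝ≥0∞) / (n + 1) ∧
    1 - α ≤ (⌈((n : ℝ) + 1) * (1 - α)⌉₊ : ℝ) / ((n : ℝ) + 1) := by
  obtain ⟨hk1, hkn⟩ := one_le_natCeil_mul_one_sub_le hα.2 hα'
  set k := ⌈((n : ℝ) + 1) * (1 - α)⌉₊
  refine ⟨⟨hk1, hkn⟩, ?_,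
    (le_div_iff₀ (by positivity)).2 ((mul_comm _ _).trans_le (Nat.le_ceil _))⟩
  have hevent : {ω | X (Fin.last n) ω ≤ kthSmallest n (fun i : Fin n => X i.castSucc ω) k} =
      {ω | strictRank (X · ω) (Fin.last n) < k} := by
    ext ω
    exact (le_kthSmallest_iff hk1 hkn _ _).trans
      (iff_of_eq (congrArg (· < k) (strictRank_last (X · ω)).symm))
  have hsum := sum_measure_eq_of_ae_card_eq (μ := μ)
    (B := fun i => {ω | strictRank (X · ω) i < k})
    (fun i => measurableSet_strictRank_lt i k |>.preimage (measurable_pi_lambda _ hmeas))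
    ((ae_injective_of_measure_eq_zero hdist).mono fun ω hω =>
      card_strictRank_lt hω (k := k) (by simp; omega))
  simp only [measure_strictRank_lt_eq_of_exchangeable hmeas hexch (Fin.last n), sum_const,
    card_univ, Fintype.card_fin, nsmul_eq_mul, measure_univ, mul_one] at hsum
  rw [hevent, ENNReal.eq_div_iff (by simp) (by simp), ← hsum]
  push_cast
  ring
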